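/- (Convergence of simultaneous gradient play conditioned on gradient value.) Suppose each u_i(·, a_{−i}) is concave in a_i for every fixed a_{−i} ∈ 𝒜_{−i}. Let φ : 𝒜 → ℝ be an L-smooth α-potential function of the game with α > 0, L > 0, bounded from above, satisfying |(∂φ/∂a_i)(a) − (∂u_i/∂a_i)(a)| ≤ α/a_δ for all i and a ∈ 𝒜. Let step sizes η_i > 0 with η̄ := max_i η_i, ξ₁ := 1/a_δ, ξ₂ := min{2ξ₁/L, 1/D}, and suppose η̄ ≤ min{1/L, 2ξ₁²α²/(LD²), Lξ₂²α²/(2(ξ₁αD + ξ₁²α²))}. Let {a^k}_{k=0}^∞ ⊆ 𝒜 be the sequence where, for each k and each player i: a_i^{k+1} = Proj_{𝒜_i}(a_i^k + η_i (∂u_i/∂a_i)(a^k)) if |(∂u_i/∂a_i)(a^k)| > 2α/a_δ, and a_i^{k+1} = a_i^k otherwise. Then there exists k̄ ≥ 0 such that for all k ≥ k̄, a^k is a 2α-Nash equilibrium of the game. -/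

import Mathlib

/-!
At a fixed point of the dynamics every player either has a partial derivative of size at most
`2α / a_δ`, so that by concavity (the tangent line bounds `u_i` from above) no deviation gains more
than `2α`, or sits at the endpoint of its interval towards which its partial derivative points,
so that no deviation gains anything.

A fixed point is reached after finitely many steps. By the gradient relation a moving coordinate
moves in an ascent direction of `φ`, and the step-size bound turns the descent inequality of the
`L`-smooth `φ` into a gain of `φ` proportional to the displacement. The displacement is bounded
below unless the coordinate enters an endpoint from the interior; adding a bonus for every
coordinate sitting at an endpoint yields a function that is bounded above on the box and
increases by a fixed amount at every step that moves.
-/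

open Function

/-- Partial derivative of `f : ℝ^N → ℝ` with respect to coordinate `j` at the point `a`. -/
noncomputable def pd {N : ℕ} (j : Fin N) (f : (Fin N → ℝ) → ℝ) (a : Fin N → ℝ) : ℝ :=
  deriv (fun t => f (Function.update a j t)) (a j)

open Set Finset

theorem exists_pos_forall_le {ι : Type*} [Finite ι] {p : ι → Prop} {f : ι → ℝ}
    (hf : ∀ i, p i → 0 < f i) : ∃ δ > 0, ∀ i, p i → δ ≤ f i := by
  have h : ∀ᶠ δ in nhdsWithin (0 : ℝ) (Ioi 0), 0 < δ ∧ ∀ i, p i → δ ≤ f i :=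
    eventually_mem_nhdsWithin.and <| Filter.eventually_all.2 fun i =>
      Filter.eventually_imp_distrib_left.2 fun hi =>
        nhdsWithin_le_nhds ((eventually_lt_nhds (hf i hi)).mono fun _ h => h.le)
  exact h.exists

theorem not_forall_add_le_of_bddAbove {Ψ : ℕ → ℝ} {c : ℝ} (hc : 0 < c)
    (hΨ : BddAbove (range Ψ)) : ¬ ∀ k, Ψ k + c ≤ Ψ (k + 1) := by
  intro hinc
  obtain ⟨M, hM⟩ := hΨ
  have hgrow : ∀ k : ℕ, Ψ 0 + k * c ≤ Ψ k := by
    intro k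
    induction k with
    | zero => simp
    | succ k ih => push_cast; linarith [hinc k]
  obtain ⟨n, hn⟩ := exists_nat_gt ((M - Ψ 0) / c)
  rw [div_lt_iff₀ hc] at hn
  linarith [hgrow n, hM (mem_range_self n)]

theorem eq_of_le_of_succ_eq {α : Type*} {T : α → α} {a : ℕ → α} (ha : ∀ k, a (k + 1) = T (a k))
    {k₀ : ℕ} (hk₀ : a (k₀ + 1) = a k₀) {k : ℕ} (hk : k₀ ≤ k) : a k = a k₀ := by
  induction k, hk using Nat.le_induction with
  | base => rfl
  | succ k _ ih => rw [ha, ih, ← ha, hk₀]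

theorem ConcaveOn.le_add_mul_sub_of_hasDerivAt {S : Set ℝ} {g : ℝ → ℝ} {g' x y : ℝ}
    (hg : ConcaveOn ℝ S g) (hx : x ∈ S) (hy : y ∈ S) (hd : HasDerivAt g g' x) :
    g y ≤ g x + g' * (y - x) := by
  rcases lt_trichotomy x y with hxy | rfl | hxy
  · have h := hg.slope_le_of_hasDerivAt hx hy hxy hd
    rw [slope_def_field, div_le_iff₀ (sub_pos.2 hxy)] at h
    linarith
  · simp
  · have h := hg.le_slope_of_hasDerivAt hy hx hxy hd
    rw [slope_def_field, le_div_iff₀ (sub_pos.2 hxy)] at h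
    linarith

theorem le_image_one_of_deriv_ge {g g' : ℝ → ℝ} {K : ℝ} (hg : ∀ t, HasDerivAt g (g' t) t)
    (hK : ∀ t ∈ Ioo (0 : ℝ) 1, g' 0 - K * t ≤ g' t) : g 0 + g' 0 - K / 2 ≤ g 1 := by
  set ψ : ℝ → ℝ := fun t => g t - g' 0 * t + K / 2 * t ^ 2
  have hψ : ∀ t, HasDerivAt ψ (g' t - g' 0 + K * t) t := fun t => by
    refine (((hg t).sub ((hasDerivAt_id' t).const_mul (g' 0))).add
      ((hasDerivAt_pow 2 t).const_mul (K / 2))).congr_deriv ?_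
    push_cast
    ring
  have hmono : MonotoneOn ψ (Icc 0 1) := by
    refine monotoneOn_of_hasDerivWithinAt_nonneg (convex_Icc 0 1)
      (fun t _ => (hψ t).continuousAt.continuousWithinAt) (fun t _ => (hψ t).hasDerivWithinAt) ?_
    rw [interior_Icc]
    intro t ht
    linarith [hK t ht]
  have h01 := hmono (left_mem_Icc.2 zero_le_one) (right_mem_Icc.2 zero_le_one) zero_le_one
  simp only [ψ] at h01
  linarith

section Projection

variable {lo hi x t : ℝ}

theorem abs_clamp_add_sub_le (hx : x ∈ Icc lo hi) : |max lo (min hi (x + t)) - x| ≤ |t| := by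
  obtain ⟨h₁, h₂⟩ := hx
  grind

theorem clamp_add_sub_mul_nonneg (hx : x ∈ Icc lo hi) :
    0 ≤ (max lo (min hi (x + t)) - x) * t := by
  obtain ⟨h₁, h₂⟩ := hx
  rcases le_total 0 t with ht | ht
  · exact mul_nonneg (by grind) ht
  · exact mul_nonneg_of_nonpos_of_nonpos (by grind) ht

theorem mul_sub_nonpos_of_clamp_add_eq (hx : x ∈ Icc lo hi) (hfix : max lo (min hi (x + t)) = x)
    {y : ℝ} (hy : y ∈ Icc lo hi) : t * (y - x) ≤ 0 := by
  obtain ⟨h₁, h₂⟩ := hx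
  obtain ⟨h₃, h₄⟩ := hy
  rcases lt_trichotomy t 0 with ht | rfl | ht
  · exact mul_nonpos_of_nonpos_of_nonneg ht.le (by grind)
  · simp
  · exact mul_nonpos_of_nonneg_of_nonpos ht.le (by grind)

theorem clamp_add_ne_cases (hx : x ∈ Icc lo hi) (hmove : max lo (min hi (x + t)) ≠ x) :
    min |t| (hi - lo) ≤ |max lo (min hi (x + t)) - x| ∨
      (x ∉ ({lo, hi} : Set ℝ) ∧ max lo (min hi (x + t)) ∈ ({lo, hi} : Set ℝ)) := by
  obtain ⟨h₁, h₂⟩ := hx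
  simp only [mem_insert_iff, mem_singleton_iff]
  grind

end Projection

theorem mul_le_of_abs_le_div {g z c w : ℝ} (hc : 0 ≤ c) (hg : |g| ≤ c / w) (hz : |z| ≤ w) :
    g * z ≤ c := by
  rcases (abs_nonneg z).trans hz |>.eq_or_lt with rfl | hw
  · simp [abs_nonpos_iff.1 hz, hc]
  calc g * z ≤ |g| * |z| := (le_abs_self _).trans (abs_mul g z).le
    _ ≤ c / w * w := mul_le_mul hg hz (abs_nonneg z) (div_nonneg hc hw.le)
    _ = c := div_mul_cancel₀ c hw.ne'

theorem half_mul_abs_le_gain {d G F η L β : ℝ} (hdG : 0 ≤ d * G) (hd : |d| ≤ η * |G|)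
    (hFG : |F - G| ≤ β) (hL : 0 ≤ L) (hG : 2 * β < |G|) (hηG : L * η * G ^ 2 ≤ 2 * β ^ 2) :
    β / 2 * |d| ≤ F * d - L / 2 * d ^ 2 := by
  have hβ : 0 ≤ β := (abs_nonneg _).trans hFG
  have hGpos : 0 < |G| := by linarith
  have hGd : G * d = |G| * |d| := by rw [← abs_mul, abs_of_nonneg (by linarith [mul_comm d G])]
  have hFGd : -(β * |d|) ≤ (F - G) * d := by
    have := (abs_mul (F - G) d).trans_le (mul_le_mul_of_nonneg_right hFG (abs_nonneg d))
    linarith [neg_abs_le ((F - G) * d)]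
  have hstep : L * η * |G| ≤ β := by
    refine le_of_mul_le_mul_right ?_ hGpos
    have hsq : L * η * |G| * |G| = L * η * G ^ 2 := by rw [mul_assoc _ |G|, ← sq, sq_abs]
    nlinarith
  have hquad : L / 2 * d ^ 2 ≤ β / 2 * |d| := by
    have hdd : d ^ 2 ≤ η * |G| * |d| := by
      rw [← sq_abs]; nlinarith [abs_nonneg d]
    nlinarith [abs_nonneg d]
  nlinarith [abs_nonneg d]

theorem half_le_gain_add_indicator_sub {lo hi x b η G F L β δ : ℝ} (hx : x ∈ Icc lo hi)
    (hb : b = max lo (min hi (x + η * G))) (hmove : b ≠ x) (hη : 0 < η) (hL : 0 ≤ L)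
    (hG : 2 * β < |G|) (hFG : |F - G| ≤ β) (hηG : L * η * G ^ 2 ≤ 2 * β ^ 2) (hδ₀ : 0 ≤ δ)
    (hδ : lo < hi → δ ≤ β / 2 * min (2 * β * η) (hi - lo)) :
    δ / 2 ≤ F * (b - x) - L / 2 * (b - x) ^ 2 +
      δ / 2 * (({lo, hi} : Set ℝ).indicator 1 b - ({lo, hi} : Set ℝ).indicator 1 x) := by
  have hβ : 0 ≤ β := (abs_nonneg _).trans hFG
  have hdG : 0 ≤ (b - x) * G := by
    have h := clamp_add_sub_mul_nonneg hx (t := η * G)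
    rw [← hb, mul_left_comm] at h
    exact (mul_nonneg_iff_of_pos_left hη).1 h
  have hd : |b - x| ≤ η * |G| := by
    simpa [hb, abs_mul, abs_of_pos hη] using abs_clamp_add_sub_le hx (t := η * G)
  have hgain := half_mul_abs_le_gain hdG hd hFG hL hG hηG
  have hind : ∀ z, ({lo, hi} : Set ℝ).indicator 1 z ∈ Icc (0 : ℝ) 1 := fun z =>
    ⟨indicator_nonneg (fun _ _ => zero_le_one) z, indicator_le_self' (fun _ _ => zero_le_one) z⟩
  rcases clamp_add_ne_cases hx (hb ▸ hmove) with hfar | ⟨hxint, hbend⟩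
  · rw [← hb] at hfar
    have hlt : lo < hi := by
      obtain ⟨h₁, h₂⟩ := hx
      refine lt_of_le_of_ne (h₁.trans h₂) fun h => hmove ?_
      subst h
      grind
    have hmin : min (2 * β * η) (hi - lo) ≤ |b - x| := by
      refine le_trans (min_le_min_right _ ?_) hfar
      rw [abs_mul, abs_of_pos hη]
      nlinarith
    have := mul_le_mul_of_nonneg_left hmin (by positivity : (0 : ℝ) ≤ β / 2)
    nlinarith [hδ hlt, (hind b).1, (hind x).2]
  · rw [← hb] at hbend
    rw [indicator_of_mem hbend, indicator_of_notMem hxint, Pi.one_apply]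
    nlinarith [abs_nonneg (b - x)]

section PartialDerivative

variable {N : ℕ} {f : (Fin N → ℝ) → ℝ}

theorem pd_eq_fderiv (hf : Differentiable ℝ f) (x : Fin N → ℝ) (i : Fin N) :
    pd i f x = fderiv ℝ f x (Pi.single i 1) := by
  have h := (hf (update x i (x i))).hasFDerivAt.comp_hasDerivAt (x i) (hasDerivAt_update x i (x i))
  rw [update_eq_self] at h
  exact h.deriv

theorem fderiv_apply_eq_sum_pd (hf : Differentiable ℝ f) (x v : Fin N → ℝ) :
    fderiv ℝ f x v = ∑ i, pd i f x * v i := by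
  conv_lhs => rw [pi_eq_sum_univ' v]
  simp [map_sum, pd_eq_fderiv hf, mul_comm]

theorem le_add_pd_mul_sub_of_concaveOn (hf : Differentiable ℝ f) {x : Fin N → ℝ} {i : Fin N}
    {S : Set ℝ} (hconc : ConcaveOn ℝ S fun t => f (update x i t)) (hx : x i ∈ S) {y : ℝ}
    (hy : y ∈ S) : f (update x i y) ≤ f x + pd i f x * (y - x i) := by
  have hd : DifferentiableAt ℝ (fun t => f (update x i t)) (x i) :=
    ((hf _).hasFDerivAt.comp_hasDerivAt (x i) (hasDerivAt_update x i (x i))).differentiableAt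
  have h := hconc.le_add_mul_sub_of_hasDerivAt hx hy hd.hasDerivAt
  rwa [update_eq_self] at h

theorem add_sum_pd_mul_sub_le_of_smooth (hf : Differentiable ℝ f) {A : Set (Fin N → ℝ)}
    (hA : Convex ℝ A) {L : ℝ}
    (hsmooth : ∀ x ∈ A, ∀ y ∈ A,
      √(∑ i, (pd i f x - pd i f y) ^ 2) ≤ L * √(∑ i, (x i - y i) ^ 2))
    {x y : Fin N → ℝ} (hx : x ∈ A) (hy : y ∈ A) :
    f x + ∑ i, pd i f x * (y i - x i) - L / 2 * ∑ i, (y i - x i) ^ 2 ≤ f y := by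
  set v := y - x
  set S := ∑ i, v i ^ 2
  have hγ : ∀ t : ℝ, HasDerivAt (fun s : ℝ => x + s • v) v t := fun t => by
    simpa using ((hasDerivAt_id t).smul_const v).const_add x
  have key := le_image_one_of_deriv_ge (g := fun t => f (x + t • v))
    (g' := fun t => ∑ i, pd i f (x + t • v) * v i) (K := L * S)
    (fun t => by
      rw [← fderiv_apply_eq_sum_pd hf]
      exact (hf _).hasFDerivAt.comp_hasDerivAt t (hγ t)) ?_
  · simp only [v, S, zero_smul, add_zero, one_smul, add_sub_cancel, Pi.sub_apply] at key
    linarith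
  intro t ht
  have hxt : x + t • v ∈ A := hA.add_smul_sub_mem hx hy ⟨ht.1.le, ht.2.le⟩
  have hdist : ∑ i, (x i - (x + t • v) i) ^ 2 = t ^ 2 * S := by
    rw [Finset.mul_sum]
    refine Finset.sum_congr rfl fun i _ => ?_
    simp only [Pi.add_apply, Pi.smul_apply, smul_eq_mul]
    ring
  have hlip := hsmooth x hx _ hxt
  rw [hdist, Real.sqrt_mul (sq_nonneg t), Real.sqrt_sq ht.1.le] at hlip
  have hSS : √S * √S = S := Real.mul_self_sqrt (Finset.sum_nonneg fun i _ => sq_nonneg _)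
  simp only [zero_smul, add_zero]
  calc ∑ i, pd i f x * v i - L * S * t
      = ∑ i, pd i f (x + t • v) * v i + (∑ i, (pd i f x - pd i f (x + t • v)) * v i
          - L * t * (√S * √S)) := by
        rw [hSS]; simp only [sub_mul, Finset.sum_sub_distrib]; ring
    _ ≤ ∑ i, pd i f (x + t • v) * v i := by
        have hcs := Real.sum_mul_le_sqrt_mul_sqrt univ (fun i => pd i f x - pd i f (x + t • v)) v
        nlinarith [mul_le_mul_of_nonneg_right hlip (Real.sqrt_nonneg S)]

end PartialDerivative

noncomputable def gradientPlayStep {N : ℕ} (lo hi η : Fin N → ℝ)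
    (u : Fin N → (Fin N → ℝ) → ℝ) (θ : ℝ) (x : Fin N → ℝ) : Fin N → ℝ := fun i =>
  if θ < |pd i (u i) x| then max (lo i) (min (hi i) (x i + η i * pd i (u i) x)) else x i

def IsApproxNashEquilibrium {N : ℕ} (lo hi : Fin N → ℝ) (u : Fin N → (Fin N → ℝ) → ℝ) (ε : ℝ)
    (x : Fin N → ℝ) : Prop :=
  ∀ i, ∀ y ∈ Icc (lo i) (hi i), u i (update x i y) - ε ≤ u i x

/-- A coordinate entering an endpoint of its interval from the interior may increase `φ`
arbitrarily little, while every other move increases it by at least `δ`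
(`half_le_gain_add_indicator_sub`). Rewarding each coordinate at an endpoint with `δ / 2` makes
every move gain at least `δ / 2`. -/
noncomputable def gradientPlayLyapunov {N : ℕ} (lo hi : Fin N → ℝ) (φ : (Fin N → ℝ) → ℝ) (δ : ℝ)
    (x : Fin N → ℝ) : ℝ :=
  φ x + δ / 2 * ∑ i, ({lo i, hi i} : Set ℝ).indicator 1 (x i)

section GradientPlay

variable {N : ℕ} {lo hi η : Fin N → ℝ} {u : Fin N → (Fin N → ℝ) → ℝ} {θ : ℝ}

theorem gradientPlayStep_mem_pi {x : Fin N → ℝ} (hx : x ∈ univ.pi fun i => Icc (lo i) (hi i)) :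
    gradientPlayStep lo hi η u θ x ∈ univ.pi fun i => Icc (lo i) (hi i) := by
  rw [mem_univ_pi] at hx ⊢
  intro i
  unfold gradientPlayStep
  split_ifs
  · exact ⟨le_max_left _ _, max_le ((hx i).1.trans (hx i).2) (min_le_left _ _)⟩
  · exact hx i

theorem gradientPlay_mem_pi {a : ℕ → Fin N → ℝ} (ha₀ : a 0 ∈ univ.pi fun i => Icc (lo i) (hi i))
    (ha : ∀ k, a (k + 1) = gradientPlayStep lo hi η u θ (a k)) :
    ∀ k, a k ∈ univ.pi fun i => Icc (lo i) (hi i)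
  | 0 => ha₀
  | k + 1 => ha k ▸ gradientPlayStep_mem_pi (gradientPlay_mem_pi ha₀ ha k)

theorem isApproxNashEquilibrium_of_gradientPlayStep_eq {ε w : ℝ} {x : Fin N → ℝ} (hε : 0 ≤ ε)
    (hu : ∀ i, Differentiable ℝ (u i))
    (hconc : ∀ i, ConcaveOn ℝ (Icc (lo i) (hi i)) fun t => u i (update x i t))
    (hw : ∀ i, ∀ y ∈ Icc (lo i) (hi i), |y - x i| ≤ w) (hη : ∀ i, 0 < η i)
    (hx : x ∈ univ.pi fun i => Icc (lo i) (hi i))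
    (hfix : gradientPlayStep lo hi η u (ε / w) x = x) :
    IsApproxNashEquilibrium lo hi u ε x := by
  intro i y hy
  have hxi := mem_univ_pi.1 hx i
  have htangent := le_add_pd_mul_sub_of_concaveOn (hu i) (hconc i) hxi hy
  suffices pd i (u i) x * (y - x i) ≤ ε by linarith
  have hfixi := congrFun hfix i
  unfold gradientPlayStep at hfixi
  split_ifs at hfixi
  · have h := mul_sub_nonpos_of_clamp_add_eq hxi hfixi hy
    rw [mul_assoc] at h
    linarith [nonpos_of_mul_nonpos_right h (hη i)]
  · exact mul_le_of_abs_le_div hε (not_lt.1 ‹_›) (hw i y hy)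

variable {φ : (Fin N → ℝ) → ℝ} {L β D δ : ℝ}

theorem gradientPlayLyapunov_le {M : ℝ} (hδ : 0 ≤ δ) {x : Fin N → ℝ} (hφx : φ x ≤ M) :
    gradientPlayLyapunov lo hi φ δ x ≤ M + δ / 2 * N := by
  have hsum : ∑ i, ({lo i, hi i} : Set ℝ).indicator 1 (x i) ≤ (N : ℝ) := by
    calc ∑ i, ({lo i, hi i} : Set ℝ).indicator 1 (x i) ≤ ∑ _i : Fin N, (1 : ℝ) :=
          Finset.sum_le_sum fun i _ => indicator_le_self' (fun _ _ => zero_le_one) _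
      _ = N := by simp
  unfold gradientPlayLyapunov
  nlinarith

theorem gradientPlayLyapunov_add_le_of_step (hL : 0 ≤ L) (hφ : Differentiable ℝ φ)
    (hsmooth : ∀ x ∈ univ.pi (fun i => Icc (lo i) (hi i)),
      ∀ y ∈ univ.pi (fun i => Icc (lo i) (hi i)),
        √(∑ i, (pd i φ x - pd i φ y) ^ 2) ≤ L * √(∑ i, (x i - y i) ^ 2))
    (hgrad : ∀ i, ∀ x ∈ univ.pi (fun i => Icc (lo i) (hi i)), |pd i φ x - pd i (u i) x| ≤ β)
    (hD : ∀ i, ∀ x ∈ univ.pi (fun i => Icc (lo i) (hi i)), |pd i (u i) x| ≤ D)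
    (hη : ∀ i, 0 < η i) (hηD : ∀ i, L * η i * D ^ 2 ≤ 2 * β ^ 2) (hδ₀ : 0 ≤ δ)
    (hδ : ∀ i, lo i < hi i → δ ≤ β / 2 * min (2 * β * η i) (hi i - lo i))
    {x : Fin N → ℝ} (hx : x ∈ univ.pi fun i => Icc (lo i) (hi i))
    (hmove : gradientPlayStep lo hi η u (2 * β) x ≠ x) :
    gradientPlayLyapunov lo hi φ δ x + δ / 2 ≤
      gradientPlayLyapunov lo hi φ δ (gradientPlayStep lo hi η u (2 * β) x) := by
  set y := gradientPlayStep lo hi η u (2 * β) x with hy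
  set c : Fin N → ℝ := fun i => pd i φ x * (y i - x i) - L / 2 * (y i - x i) ^ 2 +
    δ / 2 * (({lo i, hi i} : Set ℝ).indicator 1 (y i) - ({lo i, hi i} : Set ℝ).indicator 1 (x i))
  have hc : ∀ i, y i ≠ x i → δ / 2 ≤ c i := by
    intro i hyi
    have hG : 2 * β < |pd i (u i) x| := by
      by_contra h
      exact hyi (by simp [hy, gradientPlayStep, h])
    have hG2 : L * η i * pd i (u i) x ^ 2 ≤ 2 * β ^ 2 := by
      rw [← sq_abs]
      exact (mul_le_mul_of_nonneg_left (pow_le_pow_left₀ (abs_nonneg _) (hD i x hx) 2)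
        (mul_nonneg hL (hη i).le)).trans (hηD i)
    exact half_le_gain_add_indicator_sub (mem_univ_pi.1 hx i) (by simp [hy, gradientPlayStep, hG])
      hyi (hη i) hL hG (hgrad i x hx) hG2 hδ₀ (hδ i)
  have hc₀ : ∀ i, 0 ≤ c i := fun i => by
    by_cases hi : y i = x i
    · simp [c, hi]
    · exact (div_nonneg hδ₀ zero_le_two).trans (hc i hi)
  obtain ⟨j, hj⟩ := Function.ne_iff.1 hmove
  have hsum : δ / 2 ≤ ∑ i, c i :=
    (hc j hj).trans (Finset.single_le_sum (fun i _ => hc₀ i) (Finset.mem_univ j))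
  have hdesc := add_sum_pd_mul_sub_le_of_smooth hφ (convex_pi fun i _ => convex_Icc _ _) hsmooth hx
    (gradientPlayStep_mem_pi (η := η) (u := u) (θ := 2 * β) hx)
  simp only [c, Finset.sum_add_distrib, Finset.sum_sub_distrib, ← Finset.mul_sum] at hsum
  unfold gradientPlayLyapunov
  linarith

theorem gradientPlay_exists_succ_eq (hβ : 0 < β) (hL : 0 ≤ L) (hφ : Differentiable ℝ φ)
    (hsmooth : ∀ x ∈ univ.pi (fun i => Icc (lo i) (hi i)),
      ∀ y ∈ univ.pi (fun i => Icc (lo i) (hi i)),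
        √(∑ i, (pd i φ x - pd i φ y) ^ 2) ≤ L * √(∑ i, (x i - y i) ^ 2))
    (hbdd : ∃ M : ℝ, ∀ x ∈ univ.pi (fun i => Icc (lo i) (hi i)), φ x ≤ M)
    (hgrad : ∀ i, ∀ x ∈ univ.pi (fun i => Icc (lo i) (hi i)), |pd i φ x - pd i (u i) x| ≤ β)
    (hD : ∀ i, ∀ x ∈ univ.pi (fun i => Icc (lo i) (hi i)), |pd i (u i) x| ≤ D)
    (hη : ∀ i, 0 < η i) (hηD : ∀ i, L * η i * D ^ 2 ≤ 2 * β ^ 2)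
    {a : ℕ → Fin N → ℝ} (ha₀ : a 0 ∈ univ.pi fun i => Icc (lo i) (hi i))
    (ha : ∀ k, a (k + 1) = gradientPlayStep lo hi η u (2 * β) (a k)) :
    ∃ k, a (k + 1) = a k := by
  have hbox := gradientPlay_mem_pi ha₀ ha
  obtain ⟨δ, hδ, hδle⟩ := exists_pos_forall_le (p := fun i => lo i < hi i)
    (f := fun i => β / 2 * min (2 * β * η i) (hi i - lo i)) fun i hlt =>
      mul_pos (half_pos hβ) (lt_min (mul_pos (mul_pos two_pos hβ) (hη i)) (sub_pos.2 hlt))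
  obtain ⟨M, hM⟩ := hbdd
  by_contra! hmove
  refine not_forall_add_le_of_bddAbove (Ψ := fun k => gradientPlayLyapunov lo hi φ δ (a k))
    (half_pos hδ) ⟨M + δ / 2 * N, forall_mem_range.2 fun k =>
      gradientPlayLyapunov_le hδ.le (hM _ (hbox k))⟩ fun k => ?_
  simp only [ha k]
  exact gradientPlayLyapunov_add_le_of_step hL hφ hsmooth hgrad hD hη hηD hδ.le hδle (hbox k)
    (ha k ▸ hmove k)

end GradientPlay

theorem abs_sub_le_sSup_abs_sub {ι : Type*} [Finite ι] {lo hi : ι → ℝ} {i : ι} {x y : ℝ}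
    (hx : x ∈ Icc (lo i) (hi i)) (hy : y ∈ Icc (lo i) (hi i)) :
    |x - y| ≤
      sSup {d : ℝ | ∃ i, ∃ x ∈ Icc (lo i) (hi i), ∃ y ∈ Icc (lo i) (hi i), d = |x - y|} := by
  obtain ⟨B, hB⟩ := (finite_range fun j => hi j - lo j).bddAbove
  refine le_csSup ⟨B, ?_⟩ ⟨i, x, hx, y, hy, rfl⟩
  rintro _ ⟨j, x, hx, y, hy, rfl⟩
  exact (abs_sub_le_iff.2 ⟨by linarith [hx.2, hy.1], by linarith [hx.1, hy.2]⟩).trans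
    (hB (mem_range_self j))

theorem gradient_play_convergence_general
    {N : ℕ}
    (lo hi : Fin N → ℝ)
    (u : Fin N → (Fin N → ℝ) → ℝ) (hu : ∀ i, ContDiff ℝ 2 (u i))
    (A : Set (Fin N → ℝ)) (hA : A = Set.univ.pi fun i => Set.Icc (lo i) (hi i))
    (aδ : ℝ)
    (haδ : aδ = sSup {d : ℝ | ∃ i : Fin N, ∃ x ∈ Set.Icc (lo i) (hi i),
      ∃ y ∈ Set.Icc (lo i) (hi i), d = |x - y|})
    (D : ℝ) (hD : 0 < D) (hDbound : ∀ i : Fin N, ∀ a ∈ A, |pd i (u i) a| ≤ D)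
    (hconc : ∀ i : Fin N, ∀ a ∈ A,
      ConcaveOn ℝ (Set.Icc (lo i) (hi i)) (fun t => u i (Function.update a i t)))
    (φ : (Fin N → ℝ) → ℝ) (α L : ℝ) (hαpos : 0 < α) (hLpos : 0 < L)
    (hφdiff : Differentiable ℝ φ)
    (hsmooth : ∀ a ∈ A, ∀ b ∈ A,
      Real.sqrt (∑ i, (pd i φ a - pd i φ b) ^ 2) ≤ L * Real.sqrt (∑ i, (a i - b i) ^ 2))
    (hbddAbove : ∃ M : ℝ, ∀ a ∈ A, φ a ≤ M)
    (hgradrel : ∀ i : Fin N, ∀ a ∈ A, |pd i φ a - pd i (u i) a| ≤ α / aδ)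
    (η : Fin N → ℝ) (hη : ∀ i, 0 < η i)
    (ηbar ξ₁ ξ₂ : ℝ) (hηbar : ηbar = ⨆ i, η i)
    (hξ₁ : ξ₁ = 1 / aδ)
    (hηsmall : ηbar ≤ min (1 / L) (min (2 * ξ₁ ^ 2 * α ^ 2 / (L * D ^ 2))
      (L * ξ₂ ^ 2 * α ^ 2 / (2 * (ξ₁ * α * D + ξ₁ ^ 2 * α ^ 2)))))
    (a : ℕ → Fin N → ℝ) (ha0 : a 0 ∈ A)
    (hdyn : ∀ k, ∀ i : Fin N,
      a (k + 1) i = if 2 * α / aδ < |pd i (u i) (a k)|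
        then max (lo i) (min (hi i) (a k i + η i * pd i (u i) (a k)))
        else a k i) :
    ∃ kbar : ℕ, ∀ k, kbar ≤ k →
      ∀ i : Fin N, ∀ ai' ∈ Set.Icc (lo i) (hi i),
        u i (a k) ≥ u i (Function.update (a k) i ai') - 2 * α := by
  subst hA
  set β := α / aδ
  have hθ : 2 * α / aδ = 2 * β := mul_div_assoc 2 α aδ
  have hstep : ∀ k, a (k + 1) = gradientPlayStep lo hi η u (2 * β) (a k) := fun k =>
    funext fun i => by rw [hdyn, hθ]; rfl
  have hbox := gradientPlay_mem_pi ha0 hstep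
  have hwidth : ∀ i, ∀ x ∈ Icc (lo i) (hi i), ∀ y ∈ Icc (lo i) (hi i), |x - y| ≤ aδ :=
    fun i x hx y hy => haδ ▸ abs_sub_le_sSup_abs_sub hx hy
  have hηD : ∀ i, L * η i * D ^ 2 ≤ 2 * β ^ 2 := fun i => by
    have hηi : η i ≤ 2 * ξ₁ ^ 2 * α ^ 2 / (L * D ^ 2) :=
      (le_ciSup (finite_range η).bddAbove i).trans (hηbar ▸ hηsmall.trans ((min_le_right _ _).trans (min_le_left _ _)))
    rw [le_div_iff₀ (by positivity), hξ₁] at hηi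
    linarith [show 2 * (1 / aδ) ^ 2 * α ^ 2 = 2 * β ^ 2 by ring]
  obtain ⟨k₀, hk₀⟩ : ∃ k, a (k + 1) = a k := by
    rcases le_or_gt aδ 0 with h | h
    · refine ⟨0, funext fun i => sub_eq_zero.1 (abs_nonpos_iff.1 ?_)⟩
      exact (hwidth i _ (mem_univ_pi.1 (hbox 1) i) _ (mem_univ_pi.1 (hbox 0) i)).trans h
    · exact gradientPlay_exists_succ_eq (div_pos hαpos h) hLpos.le hφdiff hsmooth hbddAbove
        hgradrel hDbound hη hηD ha0 hstep
  refine ⟨k₀, fun k hk => ?_⟩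
  rw [eq_of_le_of_succ_eq hstep hk₀ hk]
  exact isApproxNashEquilibrium_of_gradientPlayStep_eq (by positivity)
    (fun i => (hu i).differentiable (by norm_num)) (fun i => hconc i _ (hbox k₀))
    (fun i y hy => hwidth i y hy _ (mem_univ_pi.1 (hbox k₀) i)) hη (hbox k₀)
    (by rw [hθ, ← hstep, hk₀])

/-- **Convergence of simultaneous gradient play conditioned on gradient value.**
Under concavity of each `u_i` in its own action, an `L`-smooth `α`-potential function `φ`
bounded from above and satisfying the gradient relation `|∂φ/∂a_i − ∂u_i/∂a_i| ≤ α/a_δ`,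
and small enough step sizes, the conditioned simultaneous (projected) gradient play dynamics
reach, after finitely many iterations, action profiles that are `2α`-Nash equilibria. -/
theorem gradient_play_convergence
    {N : ℕ} (hN : 0 < N)
    (lo hi : Fin N → ℝ) (hlohi : ∀ i, lo i ≤ hi i)
    (u : Fin N → (Fin N → ℝ) → ℝ) (hu : ∀ i, ContDiff ℝ 2 (u i))
    (A : Set (Fin N → ℝ)) (hA : A = Set.univ.pi fun i => Set.Icc (lo i) (hi i))
    (aδ : ℝ)
    (haδ : aδ = sSup {d : ℝ | ∃ i : Fin N, ∃ x ∈ Set.Icc (lo i) (hi i),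
      ∃ y ∈ Set.Icc (lo i) (hi i), d = |x - y|})
    (D : ℝ) (hD : 0 < D) (hDbound : ∀ i : Fin N, ∀ a ∈ A, |pd i (u i) a| ≤ D)
    (hconc : ∀ i : Fin N, ∀ a ∈ A,
      ConcaveOn ℝ (Set.Icc (lo i) (hi i)) (fun t => u i (Function.update a i t)))
    (φ : (Fin N → ℝ) → ℝ) (α L : ℝ) (hαpos : 0 < α) (hLpos : 0 < L)
    (hφdiff : Differentiable ℝ φ)
    (hsmooth : ∀ a ∈ A, ∀ b ∈ A,
      Real.sqrt (∑ i, (pd i φ a - pd i φ b) ^ 2) ≤ L * Real.sqrt (∑ i, (a i - b i) ^ 2))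
    (hpot : ∀ i : Fin N, ∀ a ∈ A, ∀ ai' ∈ Set.Icc (lo i) (hi i),
      |(u i a - u i (Function.update a i ai')) - (φ a - φ (Function.update a i ai'))| ≤ α)
    (hbddAbove : ∃ M : ℝ, ∀ a ∈ A, φ a ≤ M)
    (hgradrel : ∀ i : Fin N, ∀ a ∈ A, |pd i φ a - pd i (u i) a| ≤ α / aδ)
    (η : Fin N → ℝ) (hη : ∀ i, 0 < η i)
    (ηbar ξ₁ ξ₂ : ℝ) (hηbar : ηbar = ⨆ i, η i)
    (hξ₁ : ξ₁ = 1 / aδ) (hξ₂ : ξ₂ = min (2 * ξ₁ / L) (1 / D))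
    (hηsmall : ηbar ≤ min (1 / L) (min (2 * ξ₁ ^ 2 * α ^ 2 / (L * D ^ 2))
      (L * ξ₂ ^ 2 * α ^ 2 / (2 * (ξ₁ * α * D + ξ₁ ^ 2 * α ^ 2)))))
    (a : ℕ → Fin N → ℝ) (ha0 : a 0 ∈ A)
    (hdyn : ∀ k, ∀ i : Fin N,
      a (k + 1) i = if 2 * α / aδ < |pd i (u i) (a k)|
        then max (lo i) (min (hi i) (a k i + η i * pd i (u i) (a k)))
        else a k i) :
    ∃ kbar : ℕ, ∀ k, kbar ≤ k →
      ∀ i : Fin N, ∀ ai' ∈ Set.Icc (lo i) (hi i),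
        u i (a k) ≥ u i (Function.update (a k) i ai') - 2 * α :=
  gradient_play_convergence_general lo hi u hu A hA aδ haδ D hD hDbound hconc φ α L hαpos hLpos
    hφdiff hsmooth hbddAbove hgradrel η hη ηbar ξ₁ ξ₂ hηbar hξ₁ hηsmall a ha0 hdyn
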